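/- arXiv:2307.06731 — 7 statements merged into one kernel-verified Lean document; each statement's English description precedes it below -/
import Mathlib

section
/- Suppose S(n,i), for n ∈ ℕ and i < 2^n, are finite subsets of ℕ such that |S(n,i)| ≥ n + (4^(n+1) − 1)/3 for all n and i. Then there exist sets F(n,i) ⊆ S(n,i) \ {0,…,n−1} that are pairwise disjoint (over all pairs (n,i)) and satisfy |F(n,i)| = 2^n for all n and i. -/
/-- level of index `k` -/
def Lv (k : ℕ) : ℕ := Nat.log 2 (k + 1)

noncomputable def G (S : ℕ → ℕ → Finset ℕ) : ℕ → Finset ℕ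
  | k =>
    ((((S (Lv k) (k + 1 - 2 ^ Lv k) \ Finset.range (Lv k)) \
      (Finset.range k).biUnion (fun k' => if h : k' < k then G S k' else ∅)).toList.take
        (2 ^ Lv k)).toFinset)
  decreasing_by exact h

noncomputable def avail (S : ℕ → ℕ → Finset ℕ) (k : ℕ) : Finset ℕ :=
  (S (Lv k) (k + 1 - 2 ^ Lv k) \ Finset.range (Lv k)) \
    (Finset.range k).biUnion (fun k' => G S k')

lemma G_eq (S : ℕ → ℕ → Finset ℕ) (k : ℕ) :
    G S k = ((avail S k).toList.take (2 ^ Lv k)).toFinset := by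
  have hb : (Finset.range k).biUnion (fun k' => if _ : k' < k then G S k' else ∅) =
      (Finset.range k).biUnion (fun k' => G S k') :=
    Finset.biUnion_congr rfl (fun k' hk' => dif_pos (Finset.mem_range.mp hk'))
  rw [G, hb, avail]

lemma G_subset (S : ℕ → ℕ → Finset ℕ) (k : ℕ) : G S k ⊆ avail S k := by
  rw [G_eq]
  intro x hx
  rw [List.mem_toFinset] at hx
  have := (List.take_sublist _ _).subset hx
  rwa [Finset.mem_toList] at this

lemma G_card_le (S : ℕ → ℕ → Finset ℕ) (k : ℕ) : (G S k).card ≤ 2 ^ Lv k := by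
  rw [G_eq]
  exact (List.toFinset_card_le _).trans (by simp)

lemma G_disjoint (S : ℕ → ℕ → Finset ℕ) {k k' : ℕ} (h : k' < k) :
    Disjoint (G S k) (G S k') := by
  have h1 : G S k ⊆ avail S k := G_subset S k
  have h2 : G S k' ⊆ (Finset.range k).biUnion (fun k' => G S k') :=
    Finset.subset_biUnion_of_mem _ (Finset.mem_range.mpr h)
  exact (Finset.sdiff_disjoint).mono h1 h2

lemma pow_Lv_le (k : ℕ) : 2 ^ Lv k ≤ k + 1 := Nat.pow_log_le_self 2 (Nat.succ_ne_zero k)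

lemma lt_pow_Lv (k : ℕ) : k + 1 < 2 ^ (Lv k + 1) := Nat.lt_pow_succ_log_self (by norm_num) _

lemma sum_pow_Lv (k : ℕ) :
    3 * ∑ k' ∈ Finset.range k, 2 ^ Lv k' = 4 ^ Lv k - 1 + 3 * (k + 1 - 2 ^ Lv k) * 2 ^ Lv k := by
  induction k with
  | zero => simp [Lv]
  | succ k ih =>
    rw [Finset.sum_range_succ, Nat.mul_add, ih]
    have hle := pow_Lv_le k
    have hlt := lt_pow_Lv k
    rcases lt_or_eq_of_le (Nat.succ_le_of_lt hlt) with hcase | hcase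
    · -- k + 2 < 2 ^ (Lv k + 1), so Lv (k+1) = Lv k
      have hL : Lv (k + 1) = Lv k := by
        apply Nat.log_eq_of_pow_le_of_lt_pow (hle.trans (by omega))
        omega
      rw [hL]
      have h4 : (1:ℕ) ≤ 4 ^ Lv k := Nat.one_le_pow _ _ (by norm_num)
      have he : k + 1 + 1 - 2 ^ Lv k = (k + 1 - 2 ^ Lv k) + 1 := by omega
      rw [he]
      ring_nf
    · -- k + 2 = 2 ^ (Lv k + 1)
      have hc : k + 1 + 1 = 2 ^ (Lv k + 1) := hcase
      have hL : Lv (k + 1) = Lv k + 1 := by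
        show Nat.log 2 (k + 1 + 1) = Lv k + 1
        rw [hc, Nat.log_pow (by norm_num)]
      rw [hL]
      have hsq : 2 ^ Lv k * 2 ^ Lv k = 4 ^ Lv k := by rw [← Nat.mul_pow]
      have h4 : (1:ℕ) ≤ 4 ^ Lv k := Nat.one_le_pow _ _ (by norm_num)
      have hpos : (1:ℕ) ≤ 2 ^ Lv k := Nat.one_le_two_pow
      have hp : (2:ℕ) ^ (Lv k + 1) = 2 ^ Lv k * 2 := pow_succ 2 _
      have h1 : k + 1 - 2 ^ Lv k = 2 ^ Lv k - 1 := by omega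
      have h2 : k + 1 + 1 - 2 ^ (Lv k + 1) = 0 := by omega
      rw [h1, h2]
      have expand : 3 * (2 ^ Lv k - 1) * 2 ^ Lv k + 3 * 2 ^ Lv k = 3 * 4 ^ Lv k := by
        have e1 : 3 * (2 ^ Lv k - 1) * 2 ^ Lv k + 3 * 2 ^ Lv k =
            3 * ((2 ^ Lv k - 1) + 1) * 2 ^ Lv k := by ring
        rw [e1, Nat.sub_add_cancel hpos, ← hsq]; ring
      rw [add_assoc, expand]
      simp only [Nat.mul_zero, Nat.zero_mul, mul_zero, zero_mul, add_zero]
      have h44 : (4:ℕ) ^ (Lv k + 1) = 4 * 4 ^ Lv k := by ring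
      omega

lemma Lv_code {n i : ℕ} (hi : i < 2 ^ n) : Lv (2 ^ n - 1 + i) = n := by
  have h1 : (1:ℕ) ≤ 2 ^ n := Nat.one_le_two_pow
  have hk : 2 ^ n - 1 + i + 1 = 2 ^ n + i := by omega
  unfold Lv
  rw [hk]
  apply Nat.log_eq_of_pow_le_of_lt_pow (Nat.le_add_right _ _)
  rw [pow_succ]
  omega

theorem stmt_0 (S : ℕ → ℕ → Finset ℕ)
    (hS : ∀ n i, i < 2 ^ n → n + (4 ^ (n + 1) - 1) / 3 ≤ (S n i).card) :
    ∃ F : ℕ → ℕ → Finset ℕ,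
      (∀ n i, i < 2 ^ n → F n i ⊆ S n i \ Finset.range n) ∧
      (∀ n i, i < 2 ^ n → (F n i).card = 2 ^ n) ∧
      (∀ n i m j, i < 2 ^ n → j < 2 ^ m → (n, i) ≠ (m, j) →
        Disjoint (F n i) (F m j)) := by
  refine ⟨fun n i => G S (2 ^ n - 1 + i), ?_, ?_, ?_⟩
  · intro n i hi
    show G S (2 ^ n - 1 + i) ⊆ S n i \ Finset.range n
    have h1 : (1:ℕ) ≤ 2 ^ n := Nat.one_le_two_pow
    have hsub := G_subset S (2 ^ n - 1 + i)
    rw [avail, Lv_code hi] at hsub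
    have hdec : 2 ^ n - 1 + i + 1 - 2 ^ n = i := by omega
    rw [hdec] at hsub
    exact fun x hx => Finset.sdiff_subset (hsub hx)
  · intro n i hi
    show (G S (2 ^ n - 1 + i)).card = 2 ^ n
    set k := 2 ^ n - 1 + i with hk
    have h1 : (1:ℕ) ≤ 2 ^ n := Nat.one_le_two_pow
    have hLv : Lv k = n := Lv_code hi
    have hdec : k + 1 - 2 ^ n = i := by omega
    have hsum : ∑ k' ∈ Finset.range k, 2 ^ Lv k' + 2 ^ n ≤ (4 ^ (n + 1) - 1) / 3 := by
      rw [Nat.le_div_iff_mul_le (by norm_num)]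
      have h3 := sum_pow_Lv k
      rw [hLv, hdec] at h3
      have h4 : (1:ℕ) ≤ 4 ^ n := Nat.one_le_pow _ _ (by norm_num)
      have hsq : 2 ^ n * 2 ^ n = 4 ^ n := by rw [← Nat.mul_pow]
      have hbound : 3 * i * 2 ^ n + 3 * 2 ^ n ≤ 3 * 4 ^ n := by
        have hmul : (i + 1) * 2 ^ n ≤ 2 ^ n * 2 ^ n := Nat.mul_le_mul_right _ hi
        rw [hsq] at hmul
        nlinarith
      have h5 : (4:ℕ) ^ (n + 1) = 4 * 4 ^ n := by rw [pow_succ]; ring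
      omega
    have hprev : ((Finset.range k).biUnion (fun k' => G S k')).card ≤
        ∑ k' ∈ Finset.range k, 2 ^ Lv k' :=
      (Finset.card_biUnion_le).trans (Finset.sum_le_sum fun k' _ => G_card_le S k')
    have havail : 2 ^ n ≤ (avail S k).card := by
      have hS' := hS n i hi
      have c1 : (S n i).card - n ≤ (S n i \ Finset.range n).card := by
        have := Finset.le_card_sdiff (Finset.range n) (S n i)
        simpa using this
      have c2 : (S n i \ Finset.range n).card -
          ((Finset.range k).biUnion (fun k' => G S k')).card ≤ (avail S k).card := by
        rw [avail, hLv, hdec]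
        exact Finset.le_card_sdiff _ _
      omega
    rw [G_eq, hLv]
    have hnodup : ((avail S k).toList.take (2 ^ n)).Nodup :=
      (List.take_sublist _ _).nodup ((avail S k).nodup_toList)
    rw [List.toFinset_card_of_nodup hnodup, List.length_take, Finset.length_toList]
    omega
  · intro n i m j hi hj hne
    have hcodes : 2 ^ n - 1 + i ≠ 2 ^ m - 1 + j := by
      intro h
      apply hne
      have h1 : (1:ℕ) ≤ 2 ^ n := Nat.one_le_two_pow
      have h2 : (1:ℕ) ≤ 2 ^ m := Nat.one_le_two_pow
      have hLn := Lv_code hi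
      have hLm := Lv_code hj
      rw [h] at hLn
      have hnm : n = m := hLn.symm.trans hLm
      subst hnm
      have hij : i = j := by omega
      rw [hij]
    rcases lt_or_gt_of_ne hcodes with h | h
    · exact (G_disjoint S h).symm
    · exact G_disjoint S h
end

section
/- Let D be a set of finite binary strings and suppose A(s) is a finite subset of ℕ for each s ∈ D, with |A(s)| ≥ |s| + (4^(|s|+1) − 1)/3 for all s ∈ D (where |s| is the length of s). Then there are pairwise disjoint sets B(s) ⊆ A(s) \ {0,…,|s|−1}, for s ∈ D, such that |B(s)| = 2^(|s|) for all s ∈ D. -/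
open Finset

namespace Stmt1Aux

attribute [local instance] Classical.propDecidable

def val : List Bool → ℕ
  | [] => 1
  | b :: s => 2 * val s + cond b 1 0

lemma two_pow_le_val (s : List Bool) : 2 ^ s.length ≤ val s := by
  induction s with
  | nil => simp [val]
  | cons b s ih =>
    simp only [val, List.length_cons, pow_succ]
    cases b <;> simp <;> omega

lemma val_lt (s : List Bool) : val s < 2 ^ (s.length + 1) := by
  induction s with
  | nil => simp [val]
  | cons b s ih =>
    simp only [val, List.length_cons, pow_succ]
    cases b <;> simp <;> omega

lemma val_injective : Function.Injective val := by
  intro s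
  induction s with
  | nil =>
    intro t h
    cases t with
    | nil => rfl
    | cons b t =>
      exfalso
      have h1 := two_pow_le_val t
      have h2 : (1:ℕ) ≤ 2 ^ t.length := Nat.one_le_two_pow
      cases b <;> simp [val] at h <;> omega
  | cons a s ih =>
    intro t h
    cases t with
    | nil =>
      exfalso
      have h1 := two_pow_le_val s
      have h2 : (1:ℕ) ≤ 2 ^ s.length := Nat.one_le_two_pow
      cases a <;> simp [val] at h <;> omega
    | cons b t =>
      have hab : a = b ∧ val s = val t := by
        cases a <;> cases b <;> simp [val] at h <;> simp <;> omega
      rw [hab.1, ih hab.2]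

def allLists : ℕ → Finset (List Bool)
  | 0 => {[]}
  | n + 1 => (allLists n).image (true :: ·) ∪ (allLists n).image (false :: ·)

lemma length_of_mem_allLists {n : ℕ} {t : List Bool} (h : t ∈ allLists n) :
    t.length = n := by
  induction n generalizing t with
  | zero => simp [allLists] at h; simp [h]
  | succ n ih =>
    simp only [allLists, mem_union, mem_image] at h
    rcases h with ⟨u, hu, rfl⟩ | ⟨u, hu, rfl⟩ <;> simp [ih hu]

lemma mem_allLists (t : List Bool) : t ∈ allLists t.length := by
  induction t with
  | nil => simp [allLists]
  | cons b t ih =>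
    simp only [allLists, List.length_cons, mem_union, mem_image]
    cases b
    · exact Or.inr ⟨t, ih, rfl⟩
    · exact Or.inl ⟨t, ih, rfl⟩

lemma card_allLists (n : ℕ) : (allLists n).card = 2 ^ n := by
  induction n with
  | zero => simp [allLists]
  | succ n ih =>
    rw [allLists, card_union_of_disjoint, card_image_of_injective, card_image_of_injective, ih,
      pow_succ]
    · ring
    · intro a b hab; simpa using hab
    · intro a b hab; simpa using hab
    · rw [Finset.disjoint_left]
      rintro x hx hy
      simp only [mem_image] at hx hy
      obtain ⟨u, -, rfl⟩ := hx
      obtain ⟨v, -, hv⟩ := hy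
      simp at hv

def listsLe (n : ℕ) : Finset (List Bool) := (range (n + 1)).biUnion allLists

lemma mem_listsLe {n : ℕ} {t : List Bool} (h : t.length ≤ n) : t ∈ listsLe n := by
  exact mem_biUnion.mpr ⟨t.length, mem_range.mpr (Nat.lt_succ_of_le h), mem_allLists t⟩

lemma sum_listsLe (n : ℕ) :
    ∑ t ∈ listsLe n, 2 ^ t.length = ∑ k ∈ range (n + 1), 4 ^ k := by
  rw [listsLe, sum_biUnion]
  · refine sum_congr rfl fun k _ => ?_
    calc ∑ t ∈ allLists k, 2 ^ t.length = ∑ _t ∈ allLists k, 2 ^ k := by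
          refine sum_congr rfl fun t ht => by rw [length_of_mem_allLists ht]
      _ = 2 ^ k * 2 ^ k := by rw [sum_const, card_allLists, smul_eq_mul]
      _ = 4 ^ k := by rw [← mul_pow]; norm_num
  · intro a _ b _ hab
    rw [Function.onFun, Finset.disjoint_left]
    intro x hx hy
    exact hab ((length_of_mem_allLists hx).symm.trans (length_of_mem_allLists hy))

def prevs (s : List Bool) : Finset (List Bool) :=
  (listsLe s.length).filter (fun t => val t < val s)

lemma mem_prevs {s t : List Bool} (h : val t < val s) : t ∈ prevs s := by
  refine mem_filter.mpr ⟨mem_listsLe ?_, h⟩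
  have h1 := two_pow_le_val t
  have h2 := val_lt s
  have : 2 ^ t.length < 2 ^ (s.length + 1) := by omega
  have := (Nat.pow_lt_pow_iff_right one_lt_two).mp this
  omega

noncomputable def pick (k : ℕ) (r : Finset ℕ) : Finset ℕ :=
  if h : k ≤ r.card then (Finset.exists_subset_card_eq h).choose else r

lemma pick_subset (k : ℕ) (r : Finset ℕ) : pick k r ⊆ r := by
  rw [pick]
  split
  · exact (Finset.exists_subset_card_eq ‹_›).choose_spec.1
  · exact subset_rfl

lemma pick_card_le (k : ℕ) (r : Finset ℕ) : (pick k r).card ≤ k := by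
  rw [pick]
  split
  · exact ((Finset.exists_subset_card_eq ‹_›).choose_spec.2).le
  · omega

lemma pick_card_eq {k : ℕ} {r : Finset ℕ} (h : k ≤ r.card) : (pick k r).card = k := by
  rw [pick, dif_pos h]
  exact (Finset.exists_subset_card_eq h).choose_spec.2

noncomputable def Bfun (D : Set (List Bool)) (A : List Bool → Finset ℕ) (s : List Bool) :
    Finset ℕ :=
  if s ∈ D then
    pick (2 ^ s.length)
      ((A s \ Finset.range s.length) \
        (prevs s).attach.biUnion (fun t => Bfun D A t.1))
  else ∅
termination_by val s
decreasing_by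
  exact (mem_filter.mp t.2).2

lemma geom_sum (n : ℕ) : (4 ^ (n + 1) - 1) / 3 = ∑ k ∈ range (n + 1), 4 ^ k := by
  have h : 3 * ∑ k ∈ range (n + 1), 4 ^ k + 1 = 4 ^ (n + 1) := by
    induction n with
    | zero => simp
    | succ n ih => rw [sum_range_succ]; rw [pow_succ 4 (n+1)] ; omega
  omega

lemma Bfun_card_le (D : Set (List Bool)) (A : List Bool → Finset ℕ) (s : List Bool) :
    (Bfun D A s).card ≤ 2 ^ s.length := by
  rw [Bfun]
  split
  · exact pick_card_le _ _
  · simp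

lemma Bfun_card (D : Set (List Bool)) (A : List Bool → Finset ℕ)
    (hA : ∀ s ∈ D, s.length + (4 ^ (s.length + 1) - 1) / 3 ≤ (A s).card)
    {s : List Bool} (hs : s ∈ D) : (Bfun D A s).card = 2 ^ s.length := by
  rw [Bfun, if_pos hs]
  apply pick_card_eq
  set n := s.length with hn
  set U := (prevs s).attach.biUnion (fun t => Bfun D A t.1) with hU
  set X := A s \ Finset.range n with hX
  have hUcard : U.card + 2 ^ n ≤ ∑ k ∈ range (n + 1), 4 ^ k := by
    have h1 : U.card ≤ ∑ t ∈ (prevs s).attach, (Bfun D A t.1).card := card_biUnion_le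
    have h2 : ∑ t ∈ (prevs s).attach, (Bfun D A t.1).card ≤
        ∑ t ∈ prevs s, 2 ^ t.length := by
      rw [← Finset.sum_attach (prevs s) (fun t => 2 ^ t.length)]
      exact Finset.sum_le_sum fun t _ => Bfun_card_le D A t.1
    have h3 : ∑ t ∈ prevs s, 2 ^ t.length ≤
        ∑ t ∈ (listsLe n).erase s, 2 ^ t.length := by
      refine Finset.sum_le_sum_of_subset fun t ht => ?_
      have ht' := mem_filter.mp ht
      exact mem_erase.mpr ⟨fun h => absurd (congrArg val h) (Nat.ne_of_lt ht'.2), ht'.1⟩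
    have h4 : ∑ t ∈ (listsLe n).erase s, 2 ^ t.length + 2 ^ n =
        ∑ t ∈ listsLe n, 2 ^ t.length := by
      have := Finset.sum_erase_add (listsLe n) (fun t => 2 ^ t.length)
        (mem_listsLe (le_refl n))
      simpa [hn] using this
    have h5 := sum_listsLe n
    omega
  have hXcard : ∑ k ∈ range (n + 1), 4 ^ k ≤ X.card := by
    have h6 := hA s hs
    rw [geom_sum, ← hn] at h6
    have h7 : A s ⊆ X ∪ Finset.range n := by
      intro x hx
      by_cases hxr : x ∈ Finset.range n
      · exact mem_union_right _ hxr
      · exact mem_union_left _ (mem_sdiff.mpr ⟨hx, hxr⟩)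
    have h8 : (A s).card ≤ X.card + n := by
      calc (A s).card ≤ (X ∪ Finset.range n).card := card_le_card h7
        _ ≤ X.card + n := by simpa using card_union_le X (Finset.range n)
    omega
  have h9 : X.card ≤ (X \ U).card + U.card := Finset.card_le_card_sdiff_add_card
  omega

lemma Bfun_disjoint (D : Set (List Bool)) (A : List Bool → Finset ℕ)
    {s t : List Bool} (h : val t < val s) : Disjoint (Bfun D A t) (Bfun D A s) := by
  nth_rewrite 2 [Bfun]
  split
  · have hBt : Bfun D A t ⊆ (prevs s).attach.biUnion (fun u => Bfun D A u.1) :=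
      Finset.subset_biUnion_of_mem (fun u => Bfun D A u.1)
        (mem_attach _ ⟨t, mem_prevs h⟩)
    have hpick := pick_subset (2 ^ s.length)
      ((A s \ Finset.range s.length) \ (prevs s).attach.biUnion (fun u => Bfun D A u.1))
    exact (sdiff_disjoint.symm).mono hBt hpick
  · simp

end Stmt1Aux

theorem stmt_1 (D : Set (List Bool)) (A : List Bool → Finset ℕ)
    (hA : ∀ s ∈ D, s.length + (4 ^ (s.length + 1) - 1) / 3 ≤ (A s).card) :
    ∃ B : List Bool → Finset ℕ,
      (∀ s ∈ D, B s ⊆ A s \ Finset.range s.length) ∧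
      (∀ s ∈ D, (B s).card = 2 ^ s.length) ∧
      (∀ s ∈ D, ∀ t ∈ D, s ≠ t → Disjoint (B s) (B t)) := by
  classical
  refine ⟨Stmt1Aux.Bfun D A, fun s hs => ?_, fun s hs => Stmt1Aux.Bfun_card D A hA hs,
    fun s _ t _ hst => ?_⟩
  · rw [Stmt1Aux.Bfun, if_pos hs]
    exact (Stmt1Aux.pick_subset _ _).trans sdiff_subset
  · have hne : Stmt1Aux.val s ≠ Stmt1Aux.val t := fun h => hst (Stmt1Aux.val_injective h)
    rcases lt_or_gt_of_ne hne with h | h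
    · exact Stmt1Aux.Bfun_disjoint D A h
    · exact (Stmt1Aux.Bfun_disjoint D A h).symm
end

section
/- Let g, h : ℕ → Finset ℕ be functions such that the sets g(n), n ∈ ℕ, are pairwise disjoint and the sets h(n), n ∈ ℕ, are pairwise disjoint. If the set C₀ = {n : g(n) ≠ h(n)} is infinite, then there exists an infinite set C ⊆ C₀ such that the symmetric difference (⋃_{n∈C} g(n)) Δ (⋃_{n∈C} h(n)) is infinite. -/
open Set

lemma fin_bad (g : ℕ → Finset ℕ) (hg : ∀ m n, m ≠ n → Disjoint (g m) (g n))
    (T : Finset ℕ) : {n | ¬ Disjoint (g n) T}.Finite := by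
  have hsub : {n | ¬ Disjoint (g n) T} ⊆ ⋃ x ∈ T, {n | x ∈ g n} := by
    intro n hn
    simp only [Set.mem_setOf_eq, Finset.disjoint_left, not_forall, not_not] at hn
    obtain ⟨x, hx, hxT⟩ := hn
    exact Set.mem_biUnion hxT hx
  refine Set.Finite.subset (Set.Finite.biUnion T.finite_toSet fun x _ => ?_) hsub
  apply Set.Subsingleton.finite
  intro a ha b hb
  by_contra hab
  exact Finset.disjoint_left.mp (hg a b hab) ha hb

def good (g h : ℕ → Finset ℕ) (S : Finset ℕ) : Set ℕ :=
  {n | g n ≠ h n ∧ Disjoint (g n) (S.biUnion h) ∧ Disjoint (h n) (S.biUnion g)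
    ∧ ∀ m ∈ S, m < n}

lemma good_infinite (g h : ℕ → Finset ℕ)
    (hg : ∀ m n, m ≠ n → Disjoint (g m) (g n))
    (hh : ∀ m n, m ≠ n → Disjoint (h m) (h n))
    (hC0 : {n | g n ≠ h n}.Infinite) (S : Finset ℕ) :
    (good g h S).Infinite := by
  have h1 := fin_bad g hg (S.biUnion h)
  have h2 := fin_bad h hh (S.biUnion g)
  have h3 : (Set.Iic (S.sup id)).Finite := Set.finite_Iic _
  have : {n | g n ≠ h n} \ ({n | ¬ Disjoint (g n) (S.biUnion h)} ∪
      {n | ¬ Disjoint (h n) (S.biUnion g)} ∪ Set.Iic (S.sup id)) ⊆ good g h S := by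
    intro n hn
    obtain ⟨hn0, hn1⟩ := hn
    simp only [Set.mem_union, Set.mem_setOf_eq, not_or, not_not, Set.mem_Iic, not_le] at hn1
    refine ⟨hn0, hn1.1.1, hn1.1.2, fun m hm => ?_⟩
    exact lt_of_le_of_lt (Finset.le_sup (f := id) hm) hn1.2
  exact ((hC0.diff (((h1.union h2).union h3))).mono this)

noncomputable def nxt (g h : ℕ → Finset ℕ)
    (hg : ∀ m n, m ≠ n → Disjoint (g m) (g n))
    (hh : ∀ m n, m ≠ n → Disjoint (h m) (h n))
    (hC0 : {n | g n ≠ h n}.Infinite) (S : Finset ℕ) : ℕ :=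
  (good_infinite g h hg hh hC0 S).nonempty.choose

lemma nxt_mem (g h : ℕ → Finset ℕ) (hg) (hh) (hC0) (S : Finset ℕ) :
    nxt g h hg hh hC0 S ∈ good g h S :=
  (good_infinite g h hg hh hC0 S).nonempty.choose_spec

noncomputable def P (g h : ℕ → Finset ℕ)
    (hg : ∀ m n, m ≠ n → Disjoint (g m) (g n))
    (hh : ∀ m n, m ≠ n → Disjoint (h m) (h n))
    (hC0 : {n | g n ≠ h n}.Infinite) : ℕ → Finset ℕ
  | 0 => ∅
  | k + 1 => insert (nxt g h hg hh hC0 (P g h hg hh hC0 k)) (P g h hg hh hC0 k)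

theorem stmt_6 (g h : ℕ → Finset ℕ)
    (hg : ∀ m n, m ≠ n → Disjoint (g m) (g n))
    (hh : ∀ m n, m ≠ n → Disjoint (h m) (h n))
    (hC0 : {n | g n ≠ h n}.Infinite) :
    ∃ C : Set ℕ, C ⊆ {n | g n ≠ h n} ∧ C.Infinite ∧
      (symmDiff (⋃ n ∈ C, (g n : Set ℕ)) (⋃ n ∈ C, (h n : Set ℕ))).Infinite := by
  set Q := P g h hg hh hC0 with hQ
  -- monotonicity
  have Qmono : ∀ k l, k ≤ l → Q k ⊆ Q l := by
    intro k l hkl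
    induction l with
    | zero => simp_all
    | succ l ih =>
      rcases Nat.lt_or_ge k (l+1) with hlt | hge
      · exact (ih (Nat.lt_succ_iff.mp hlt)).trans (Finset.subset_insert _ _)
      · have : k = l + 1 := le_antisymm hkl hge
        subst this; rfl
  -- cardinality
  have Qcard : ∀ k, (Q k).card = k := by
    intro k
    induction k with
    | zero => simp [hQ, P]
    | succ k ih =>
      have hmem := nxt_mem g h hg hh hC0 (Q k)
      have hnotin : nxt g h hg hh hC0 (Q k) ∉ Q k := by
        intro hcon
        exact lt_irrefl _ (hmem.2.2.2 _ hcon)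
      show (insert (nxt g h hg hh hC0 (Q k)) (Q k)).card = k + 1
      rw [Finset.card_insert_of_notMem hnotin, ih]
  -- every member of Q k is "good" at time of insertion, hence in C0
  have Qsub : ∀ k, ∀ n ∈ Q k, g n ≠ h n := by
    intro k
    induction k with
    | zero => simp [hQ, P]
    | succ k ih =>
      intro n hn
      rcases Finset.mem_insert.mp hn with rfl | hn
      · exact (nxt_mem g h hg hh hC0 (Q k)).1
      · exact ih n hn
  -- key disjointness invariant
  have Qdisj : ∀ k, ∀ n ∈ Q k, ∀ m ∈ Q k, n ≠ m → Disjoint (g n) (h m) := by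
    intro k
    induction k with
    | zero => simp [hQ, P]
    | succ k ih =>
      intro n hn m hm hnm
      have hmem := nxt_mem g h hg hh hC0 (Q k)
      rcases Finset.mem_insert.mp hn with rfl | hn
      · rcases Finset.mem_insert.mp hm with rfl | hm
        · exact absurd rfl hnm
        · exact hmem.2.1.mono_right (Finset.subset_biUnion_of_mem h hm)
      · rcases Finset.mem_insert.mp hm with rfl | hm
        · exact (hmem.2.2.1.mono_right (Finset.subset_biUnion_of_mem g hn)).symm
        · exact ih n hn m hm hnm
  set C : Set ℕ := ⋃ k, ↑(Q k) with hC
  have memC : ∀ {n}, n ∈ C → ∃ k, n ∈ Q k := by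
    intro n hn
    exact Set.mem_iUnion.mp hn
  have hCsub : C ⊆ {n | g n ≠ h n} := by
    intro n hn
    obtain ⟨k, hk⟩ := memC hn
    exact Qsub k n hk
  have hCdisj : ∀ n ∈ C, ∀ m ∈ C, n ≠ m → Disjoint (g n) (h m) := by
    intro n hn m hm hnm
    obtain ⟨k, hk⟩ := memC hn
    obtain ⟨l, hl⟩ := memC hm
    exact Qdisj (max k l) n (Qmono k _ (le_max_left _ _) hk) m
      (Qmono l _ (le_max_right _ _) hl) hnm
  have hCinf : C.Infinite := by
    intro hfin
    have := hfin.toFinset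
    have hsub : ∀ k, Q k ⊆ hfin.toFinset := by
      intro k n hn
      simp only [Set.Finite.mem_toFinset]
      exact Set.mem_iUnion.mpr ⟨k, hn⟩
    have := Finset.card_le_card (hsub (hfin.toFinset.card + 1))
    rw [Qcard] at this
    omega
  -- witnesses
  have hwit : ∀ n ∈ C, ∃ x, x ∈ symmDiff (g n) (h n) := by
    intro n hn
    have hne := hCsub hn
    by_contra hcon
    push_neg at hcon
    apply hne
    have : symmDiff (g n) (h n) = ∅ := Finset.eq_empty_of_forall_notMem hcon
    rwa [← Finset.bot_eq_empty, symmDiff_eq_bot] at this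
  classical
  choose w hw using fun n => fun hn : n ∈ C => hwit n hn
  -- w n ∈ symmDiff of the unions
  have hwmem : ∀ n (hn : n ∈ C),
      w n hn ∈ symmDiff (⋃ m ∈ C, (g m : Set ℕ)) (⋃ m ∈ C, (h m : Set ℕ)) := by
    intro n hn
    have hx := hw n hn
    rw [Finset.mem_symmDiff] at hx
    rcases hx with ⟨hxg, hxh⟩ | ⟨hxh, hxg⟩
    · apply Set.mem_symmDiff.mpr
      left
      constructor
      · exact Set.mem_biUnion hn hxg
      · intro hcon
        obtain ⟨m, hm, hxm⟩ := by simpa using hcon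
        rcases eq_or_ne n m with rfl | hnm
        · exact hxh hxm
        · exact Finset.disjoint_left.mp (hCdisj n hn m hm hnm) hxg hxm
    · apply Set.mem_symmDiff.mpr
      right
      constructor
      · exact Set.mem_biUnion hn hxh
      · intro hcon
        obtain ⟨m, hm, hxm⟩ := by simpa using hcon
        rcases eq_or_ne n m with rfl | hnm
        · exact hxg hxm
        · exact Finset.disjoint_left.mp ((hCdisj m hm n hn hnm.symm)) hxm hxh
  refine ⟨C, hCsub, hCinf, ?_⟩
  -- build injective map from C into the symmDiff
  have : Set.MapsTo (fun n => if hn : n ∈ C then w n hn else 0) C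
      (symmDiff (⋃ m ∈ C, (g m : Set ℕ)) (⋃ m ∈ C, (h m : Set ℕ))) := by
    intro n hn
    simp only [hn, dif_pos]
    exact hwmem n hn
  have hinj : Set.InjOn (fun n => if hn : n ∈ C then w n hn else 0) C := by
    intro n hn m hm heq
    simp only [hn, hm, dif_pos] at heq
    by_contra hnm
    have hxn := hw n hn
    have hxm := hw m hm
    rw [Finset.mem_symmDiff] at hxn hxm
    rw [heq] at hxn
    rcases hxn with ⟨hxg, hxh⟩ | ⟨hxh, hxg⟩ <;> rcases hxm with ⟨hxg', hxh'⟩ | ⟨hxh', hxg'⟩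
    · exact Finset.disjoint_left.mp (hg n m hnm) hxg hxg'
    · exact Finset.disjoint_left.mp (hCdisj n hn m hm hnm) hxg hxh'
    · exact Finset.disjoint_left.mp (hCdisj m hm n hn (Ne.symm hnm)) hxg' hxh
    · exact Finset.disjoint_left.mp (hh n m hnm) hxh hxh'
  exact Set.infinite_coe_iff.mp (Set.infinite_coe_iff.mpr
    ((hCinf.image hinj).mono (Set.image_subset_iff.mpr this)))
end

section
/- Let g, h : ℕ → Finset ℕ be functions such that the sets g(n), n ∈ ℕ, are pairwise disjoint and the sets h(n), n ∈ ℕ, are pairwise disjoint. If the set of pairs {(m,n) : m ≠ n and g(m) ∩ h(n) ≠ ∅} is infinite, then there exist disjoint infinite sets C, D ⊆ ℕ such that (⋃_{m∈C} g(m)) ∩ (⋃_{n∈D} h(n)) is infinite. -/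
open Classical in
lemma fiber_fin_aux (g h : ℕ → Finset ℕ)
    (hh : ∀ m n, m ≠ n → Disjoint (h m) (h n)) (m : ℕ) :
    {n | (g m ∩ h n).Nonempty}.Finite := by
  set f : ℕ → ℕ := fun n => if hn : (g m ∩ h n).Nonempty then hn.choose else 0 with hfdef
  have hfmem : ∀ n ∈ {n | (g m ∩ h n).Nonempty}, f n ∈ g m ∩ h n := by
    intro n hn
    have hfn : f n = hn.choose := dif_pos hn
    rw [hfn]
    exact hn.choose_spec
  have himg : (f '' {n | (g m ∩ h n).Nonempty}).Finite := by
    apply (g m).finite_toSet.subset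
    rintro x ⟨n, hn, rfl⟩
    exact Finset.mem_of_mem_inter_left (hfmem n hn)
  apply Set.Finite.of_finite_image himg
  intro n1 h1 n2 h2 heq
  by_contra hne
  have hx1 : f n1 ∈ h n1 := Finset.mem_of_mem_inter_right (hfmem n1 h1)
  have hx2 : f n1 ∈ h n2 := heq ▸ Finset.mem_of_mem_inter_right (hfmem n2 h2)
  exact Finset.disjoint_left.mp (hh n1 n2 hne) hx1 hx2

theorem stmt_7 (g h : ℕ → Finset ℕ)
    (hg : ∀ m n, m ≠ n → Disjoint (g m) (g n))
    (hh : ∀ m n, m ≠ n → Disjoint (h m) (h n))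
    (hpairs : {p : ℕ × ℕ | p.1 ≠ p.2 ∧ (g p.1 ∩ h p.2).Nonempty}.Infinite) :
    ∃ C D : Set ℕ, Disjoint C D ∧ C.Infinite ∧ D.Infinite ∧
      ((⋃ m ∈ C, (g m : Set ℕ)) ∩ (⋃ n ∈ D, (h n : Set ℕ))).Infinite := by
  classical
  set S : Set (ℕ × ℕ) := {p : ℕ × ℕ | p.1 ≠ p.2 ∧ (g p.1 ∩ h p.2).Nonempty} with hS
  -- fibers are finite
  have hfib1 : ∀ m : ℕ, {n | (g m ∩ h n).Nonempty}.Finite := fiber_fin_aux g h hh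
  have hfib2 : ∀ n : ℕ, {m | (g m ∩ h n).Nonempty}.Finite := by
    intro n
    have := fiber_fin_aux h g hg n
    apply this.subset
    intro m hm
    simpa [Finset.inter_comm] using hm
  -- key picking lemma
  have hpick : ∀ F : Finset ℕ, ∃ p : ℕ × ℕ, p ∈ S ∧ p.1 ∉ F ∧ p.2 ∉ F := by
    intro F
    have hbad : (S ∩ {p : ℕ × ℕ | p.1 ∈ F ∨ p.2 ∈ F}).Finite := by
      have h1 : ((F : Set ℕ) ×ˢ (⋃ m ∈ (F : Set ℕ), {n | (g m ∩ h n).Nonempty})).Finite :=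
        (F.finite_toSet).prod ((F.finite_toSet).biUnion (fun m _ => hfib1 m))
      have h2 : ((⋃ n ∈ (F : Set ℕ), {m | (g m ∩ h n).Nonempty}) ×ˢ (F : Set ℕ)).Finite :=
        ((F.finite_toSet).biUnion (fun n _ => hfib2 n)).prod (F.finite_toSet)
      apply (h1.union h2).subset
      rintro ⟨m, n⟩ ⟨⟨-, hne⟩, hmem⟩
      rcases hmem with hm | hn
      · left
        exact ⟨hm, Set.mem_biUnion hm hne⟩
      · right
        exact ⟨Set.mem_biUnion hn hne, hn⟩
    have := (hpairs.diff hbad).nonempty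
    obtain ⟨p, hpS, hpbad⟩ := this
    refine ⟨p, hpS, ?_, ?_⟩
    · intro hm; exact hpbad ⟨hpS, Or.inl hm⟩
    · intro hn; exact hpbad ⟨hpS, Or.inr hn⟩
  choose pick hpickS hpick1 hpick2 using hpick
  -- recursive sequence of finsets
  let Fs : ℕ → Finset ℕ := fun k =>
    Nat.rec ∅ (fun _ Fk => insert (pick Fk).1 (insert (pick Fk).2 Fk)) k
  have hFsucc : ∀ k, Fs (k + 1) = insert (pick (Fs k)).1 (insert (pick (Fs k)).2 (Fs k)) :=
    fun k => rfl
  set ms : ℕ → ℕ := fun k => (pick (Fs k)).1 with hms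
  set ns : ℕ → ℕ := fun k => (pick (Fs k)).2 with hns
  have hmmem : ∀ k, ms k ∈ Fs (k + 1) := fun k => Finset.mem_insert_self _ _
  have hnmem : ∀ k, ns k ∈ Fs (k + 1) := fun k =>
    Finset.mem_insert_of_mem (Finset.mem_insert_self _ _)
  have hmono : ∀ j k, j ≤ k → Fs j ⊆ Fs k := by
    intro j k hjk
    induction k with
    | zero => simp_all
    | succ k ih =>
      rcases Nat.lt_or_ge j (k + 1) with hlt | hge
      · intro x hx
        rw [hFsucc]
        exact Finset.mem_insert_of_mem (Finset.mem_insert_of_mem (ih (Nat.lt_succ_iff.mp hlt) hx))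
      · have : j = k + 1 := le_antisymm hjk hge
        subst this; exact fun x hx => hx
  have hmlt : ∀ j k, j < k → ms j ∈ Fs k := fun j k hjk => hmono _ _ hjk (hmmem j)
  have hnlt : ∀ j k, j < k → ns j ∈ Fs k := fun j k hjk => hmono _ _ hjk (hnmem j)
  have hmnot : ∀ k, ms k ∉ Fs k := fun k => hpick1 (Fs k)
  have hnnot : ∀ k, ns k ∉ Fs k := fun k => hpick2 (Fs k)
  have hSk : ∀ k, ms k ≠ ns k ∧ (g (ms k) ∩ h (ns k)).Nonempty := fun k => hpickS (Fs k)
  -- injectivity of ms, ns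
  have hminj : Function.Injective ms := by
    intro j k hjk
    by_contra hne
    rcases Nat.lt_or_ge j k with h' | h'
    · exact hmnot k (hjk ▸ hmlt j k h')
    · exact hmnot j (hjk ▸ hmlt k j (lt_of_le_of_ne h' (Ne.symm hne)))
  have hninj : Function.Injective ns := by
    intro j k hjk
    by_contra hne
    rcases Nat.lt_or_ge j k with h' | h'
    · exact hnnot k (hjk ▸ hnlt j k h')
    · exact hnnot j (hjk ▸ hnlt k j (lt_of_le_of_ne h' (Ne.symm hne)))
  have hmn : ∀ j k, ms j ≠ ns k := by
    intro j k heq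
    rcases Nat.lt_trichotomy j k with h' | h' | h'
    · exact hnnot k (heq ▸ hmlt j k h')
    · exact (hSk j).1 (h' ▸ heq)
    · exact hmnot j (heq ▸ hnlt k j h')
  refine ⟨Set.range ms, Set.range ns, ?_, Set.infinite_range_of_injective hminj,
    Set.infinite_range_of_injective hninj, ?_⟩
  · rw [Set.disjoint_left]
    rintro x ⟨j, rfl⟩ ⟨k, hk⟩
    exact hmn j k hk.symm
  · -- witnesses in the intersection
    choose x hx using fun k => (hSk k).2
    have hxg : ∀ k, x k ∈ g (ms k) := fun k => Finset.mem_of_mem_inter_left (hx k)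
    have hxh : ∀ k, x k ∈ h (ns k) := fun k => Finset.mem_of_mem_inter_right (hx k)
    have hxinj : Function.Injective x := by
      intro j k hjk
      by_contra hne
      have hne' : ms j ≠ ms k := fun he => hne (hminj he)
      exact Finset.disjoint_left.mp (hg _ _ hne') (hxg j) (hjk ▸ hxg k)
    apply (Set.infinite_range_of_injective hxinj).mono
    rintro y ⟨k, rfl⟩
    exact ⟨Set.mem_biUnion ⟨k, rfl⟩ (hxg k), Set.mem_biUnion ⟨k, rfl⟩ (hxh k)⟩
end

section
/- Let G_n (n ∈ ℕ) be simple graphs, each sufficiently random: each G_n has at least three vertices, and for every pair P of two distinct vertices of G_n and every vertex u ∉ P, there exists a vertex v ≠ u that is not adjacent to u and is adjacent to both vertices of P. For sequences of vertices y, z ∈ ∏_n V(G_n), write z E* y if {n : z(n) is not adjacent to y(n) in G_n} is finite. Then for all a, b, x ∈ ∏_n V(G_n): the set {n : x(n) ∉ {a(n), b(n)}} is finite if and only if for every z ∈ ∏_n V(G_n), (z E* a and z E* b) implies z E* x. -/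
universe u

lemma exists_ne_ne' {α : Type u} {a0 b0 c0 : α} (h12 : a0 ≠ b0) (h13 : a0 ≠ c0)
    (h23 : b0 ≠ c0) (p q : α) : ∃ c, c ≠ p ∧ c ≠ q := by
  by_cases h : a0 ≠ p ∧ a0 ≠ q
  · exact ⟨a0, h⟩
  by_cases h' : b0 ≠ p ∧ b0 ≠ q
  · exact ⟨b0, h'⟩
  push_neg at h h'
  -- h : a0 ≠ p → a0 = q, h' : b0 ≠ p → b0 = q
  refine ⟨c0, ?_, ?_⟩
  · rintro rfl
    rcases Classical.em (a0 = c0) with h1 | h1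
    · exact h13 h1
    rcases Classical.em (b0 = c0) with h2 | h2
    · exact h23 h2
    exact h12 ((h h1).trans (h' h2).symm)
  · rintro rfl
    rcases Classical.em (a0 = p) with h1 | h1
    · exact h23 (h' (fun hb => h12 (h1.trans hb.symm)))
    exact h13 (h h1)

theorem stmt_11 (V : ℕ → Type u) (G : ∀ n, SimpleGraph (V n))
    -- each G n has at least three vertices
    (h3 : ∀ n, ∃ a b c : V n, a ≠ b ∧ a ≠ c ∧ b ≠ c)
    -- each G n is 2-sufficiently random
    (hrand : ∀ n (p q u : V n), p ≠ q → u ≠ p → u ≠ q →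
      ∃ v : V n, v ≠ u ∧ ¬ (G n).Adj u v ∧ (G n).Adj v p ∧ (G n).Adj v q)
    (a b x : ∀ n, V n) :
    {n | x n ≠ a n ∧ x n ≠ b n}.Finite ↔
      ∀ z : ∀ n, V n,
        {n | ¬ (G n).Adj (z n) (a n)}.Finite →
        {n | ¬ (G n).Adj (z n) (b n)}.Finite →
        {n | ¬ (G n).Adj (z n) (x n)}.Finite := by
  constructor
  · intro hfin z hza hzb
    refine ((hfin.union hza).union hzb).subset ?_
    intro n hn
    simp only [Set.mem_setOf_eq, Set.mem_union] at *
    by_contra hc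
    push_neg at hc
    obtain ⟨⟨h1, h2⟩, h3'⟩ := hc
    rcases Classical.em (x n = a n) with hxa | hxa
    · exact hn (hxa ▸ h2)
    rcases Classical.em (x n = b n) with hxb | hxb
    · exact hn (hxb ▸ h3')
    exact hxb (h1 hxa)
  · intro h
    -- build z
    have key : ∀ n, ∃ v : V n, (G n).Adj v (a n) ∧ (G n).Adj v (b n) ∧
        ((x n ≠ a n ∧ x n ≠ b n) → ¬ (G n).Adj v (x n)) := by
      intro n
      obtain ⟨a0, b0, c0, h12, h13, h23⟩ := h3 n
      rcases Classical.em (x n ≠ a n ∧ x n ≠ b n) with ⟨hxa, hxb⟩ | hbad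
      · rcases Classical.em (a n = b n) with hab | hab
        · obtain ⟨c, hcp, hcq⟩ := exists_ne_ne' h12 h13 h23 (a n) (x n)
          obtain ⟨v, hv1, hv2, hv3, hv4⟩ :=
            hrand n (a n) c (x n) (Ne.symm hcp) hxa hcq.symm
          exact ⟨v, hv3, hab ▸ hv3, fun _ => fun hadj => hv2 hadj.symm⟩
        · obtain ⟨v, hv1, hv2, hv3, hv4⟩ := hrand n (a n) (b n) (x n) hab hxa hxb
          exact ⟨v, hv3, hv4, fun _ => fun hadj => hv2 hadj.symm⟩
      · rcases Classical.em (a n = b n) with hab | hab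
        · obtain ⟨c, hcp, _⟩ := exists_ne_ne' h12 h13 h23 (a n) (a n)
          obtain ⟨u, hup, huq⟩ := exists_ne_ne' h12 h13 h23 (a n) c
          obtain ⟨v, hv1, hv2, hv3, hv4⟩ := hrand n (a n) c u (Ne.symm hcp) hup huq
          exact ⟨v, hv3, hab ▸ hv3, fun hx => absurd hx hbad⟩
        · obtain ⟨u, hup, huq⟩ := exists_ne_ne' h12 h13 h23 (a n) (b n)
          obtain ⟨v, hv1, hv2, hv3, hv4⟩ := hrand n (a n) (b n) u hab hup huq
          exact ⟨v, hv3, hv4, fun hx => absurd hx hbad⟩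
    choose z hz1 hz2 hz3 using key
    have hfx := h z (by simp [hz1]) (by simp [hz2])
    refine hfx.subset ?_
    intro n hn
    exact hz3 n hn
end

section
/- Let M_n (n ∈ ℕ) be sets each with at least two elements, and let a, b ∈ ∏_n M_n be such that D = {n : a(n) ≠ b(n)} is infinite. Then the set {n : a(n) = b(n)} is infinite if and only if there exists x ∈ ∏_n M_n such that the set {n : b(n) ≠ x(n) and b(n) ≠ a(n)} is finite while the set {n : b(n) ≠ x(n)} is infinite. -/
universe u

theorem stmt_12 (M : ℕ → Type u) (h2 : ∀ n, ∃ x y : M n, x ≠ y)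
    (a b : ∀ n, M n) (hD : {n | a n ≠ b n}.Infinite) :
    {n | a n = b n}.Infinite ↔
      ∃ x : ∀ n, M n,
        {n | b n ≠ x n ∧ b n ≠ a n}.Finite ∧ {n | b n ≠ x n}.Infinite := by
  classical
  constructor
  · intro h
    have hx : ∀ n, ∃ c : M n, c ≠ b n := by
      intro n
      obtain ⟨u, v, huv⟩ := h2 n
      by_cases hu : u = b n
      · exact ⟨v, by simp [← hu, Ne.symm huv]⟩
      · exact ⟨u, hu⟩
    choose c hc using hx
    refine ⟨fun n => if a n = b n then c n else b n, ?_, ?_⟩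
    · convert Set.finite_empty
      ext n
      simp only [Set.mem_setOf_eq, Set.mem_empty_iff_false, iff_false]
      rintro ⟨h1, h3⟩
      apply h1
      simp [if_neg (Ne.symm h3)]
    · apply h.mono
      intro n hn
      simp only [Set.mem_setOf_eq] at hn ⊢
      simp [if_pos hn, Ne.symm (hc n)]
  · rintro ⟨x, hfin, hinf⟩
    have : {n | b n ≠ x n} ⊆ {n | b n ≠ x n ∧ b n ≠ a n} ∪ {n | a n = b n} := by
      intro n hn
      by_cases h : b n = a n
      · exact Or.inr (h.symm)
      · exact Or.inl ⟨hn, h⟩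
    rcases Set.infinite_union.mp (hinf.mono this) with h | h
    · exact absurd h (Set.not_infinite.mpr hfin)
    · exact h
end

section
/- Let M be a countably infinite set and let (P_k)_{k∈ℕ} be an independent family of subsets of M, meaning that for all disjoint finite sets K, L ⊆ ℕ, the set ⋂_{k∈K} P_k ∩ ⋂_{l∈L} (M \ P_l) is nonempty. Fix n ∈ ℕ and for each F ⊆ {0,…,n−1} let A_F = ⋂_{k∈F} P_k ∩ ⋂_{l∈{0,…,n−1}\F} (M \ P_l). Then there exists a bijection h : M → M such that h[A_F] = A_F for every F ⊆ {0,…,n−1}, and for every x ∈ M, x ∈ P_n if and only if h(x) ∉ P_n. -/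
/-!
Every atom `A_F` splits along `P n` into the two Boolean combinations
`A_F ∩ P n` and `A_F \ P n`. Both are infinite: if a Boolean combination were finite, two fresh
indices would induce the same trace on it by pigeonhole, contradicting independence. Being
subsets of the countable `M`, both pieces are countably infinite, so a bijection between them,
together with its inverse, swaps `P n` with its complement inside every atom.
-/

universe u

open Cardinal

section

variable {M ι : Type*}

theorem Equiv.exists_fiberwise_swap (f : M → ι) (S : Set M)
    (hcard : ∀ i, #{x // f x = i ∧ x ∈ S} = #{x // f x = i ∧ x ∉ S}) :
    ∃ h : M ≃ M, ∀ x, f (h x) = f x ∧ (x ∈ S ↔ h x ∉ S) := by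
  classical
  let E : ∀ t : ι × Bool,
      {x // (f x, decide (x ∈ S)) = t} ≃ {x // (f x, !decide (x ∈ S)) = t}
    | (i, true) =>
      ((Equiv.subtypeEquivRight fun x => by simp).trans (Cardinal.eq.1 (hcard i)).some).trans
        (Equiv.subtypeEquivRight fun x => by simp)
    | (i, false) =>
      ((Equiv.subtypeEquivRight fun x => by simp).trans (Cardinal.eq.1 (hcard i)).some.symm).trans
        (Equiv.subtypeEquivRight fun x => by simp)
  refine ⟨Equiv.ofFiberEquiv E, fun x => ?_⟩
  obtain ⟨hf, hS⟩ := Prod.mk.inj (Equiv.ofFiberEquiv_map E x)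
  refine ⟨hf, ?_⟩
  by_cases hx : x ∈ S <;> simp_all

def boolCombination (P : ι → Set M) (K L : Finset ι) : Set M :=
  (⋂ k ∈ K, P k) ∩ ⋂ l ∈ L, (P l)ᶜ

theorem boolCombination_infinite [Infinite ι] [DecidableEq ι] {P : ι → Set M}
    (hindep : ∀ K L : Finset ι, Disjoint K L → (boolCombination P K L).Nonempty)
    {K L : Finset ι} (hKL : Disjoint K L) : (boolCombination P K L).Infinite := by
  intro hfin
  have : Finite (boolCombination P K L) := hfin.to_subtype
  have : Infinite ↥(((K ∪ L : Finset ι) : Set ι)ᶜ) :=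
    (Finset.finite_toSet _).infinite_compl.to_subtype
  -- two fresh indices that no point of the finite combination can tell apart
  obtain ⟨⟨a, ha⟩, ⟨b, hb⟩, hab, hpat⟩ := Finite.exists_ne_map_eq_of_infinite
    fun (k : ↥(((K ∪ L : Finset ι) : Set ι)ᶜ)) (x : boolCombination P K L) => x.1 ∈ P k
  simp only [Set.mem_compl_iff, Finset.coe_union, Set.mem_union, Finset.mem_coe, not_or] at ha hb
  have hdisj : Disjoint (insert a K) (insert b L) := by
    simp [Finset.disjoint_insert_left, Finset.disjoint_insert_right, hKL, ha, hb,
      Ne.symm (Subtype.coe_injective.ne hab)]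
  obtain ⟨x, hxK, hxL⟩ := hindep _ _ hdisj
  simp only [Finset.set_biInter_insert] at hxK hxL
  have hPab : (x ∈ P a) = (x ∈ P b) := congrFun hpat ⟨x, hxK.2, hxL.2⟩
  exact hxL.1 (hPab ▸ hxK.1)

theorem boolCombination_insert_left [DecidableEq ι] (P : ι → Set M) (a : ι)
    (K L : Finset ι) : boolCombination P (insert a K) L = P a ∩ boolCombination P K L := by
  simp only [boolCombination, Finset.set_biInter_insert, Set.inter_assoc]

theorem boolCombination_insert_right [DecidableEq ι] (P : ι → Set M) (a : ι)
    (K L : Finset ι) : boolCombination P K (insert a L) = (P a)ᶜ ∩ boolCombination P K L := by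
  simp only [boolCombination, Finset.set_biInter_insert, Set.inter_left_comm]

theorem mem_boolCombination_sdiff_iff [DecidableEq ι] (P : ι → Set M)
    [∀ k, DecidablePred (· ∈ P k)] {s F : Finset ι} (hF : F ⊆ s) (x : M) :
    x ∈ boolCombination P F (s \ F) ↔ {k ∈ s | x ∈ P k} = F := by
  simp only [boolCombination, Set.mem_inter_iff, Set.mem_iInter, Set.mem_compl_iff,
    Finset.mem_sdiff, Finset.ext_iff, Finset.mem_filter]
  constructor
  · rintro ⟨hxF, hxsF⟩ k
    exact ⟨fun hk => by_contra fun hkF => hxsF k ⟨hk.1, hkF⟩ hk.2,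
      fun hk => ⟨hF hk, hxF k hk⟩⟩
  · intro hx
    exact ⟨fun k hk => ((hx k).2 hk).2, fun k hk hxk => hk.2 ((hx k).1 ⟨hk.1, hxk⟩)⟩

theorem mk_trace_inter_eq_mk_trace_diff [Countable M] [Infinite ι] [DecidableEq ι]
    {P : ι → Set M} [∀ k, DecidablePred (· ∈ P k)]
    (hindep : ∀ K L : Finset ι, Disjoint K L → (boolCombination P K L).Nonempty)
    {s : Finset ι} {a : ι} (ha : a ∉ s) (F : Finset ι) :
    #{x // {k ∈ s | x ∈ P k} = F ∧ x ∈ P a} =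
      #{x // {k ∈ s | x ∈ P k} = F ∧ x ∉ P a} := by
  by_cases hF : F ⊆ s
  · have haF : a ∉ F := fun h => ha (hF h)
    have hin :
        {x | {k ∈ s | x ∈ P k} = F ∧ x ∈ P a} = boolCombination P (insert a F) (s \ F) := by
      ext x
      rw [boolCombination_insert_left, Set.mem_inter_iff, mem_boolCombination_sdiff_iff P hF]
      exact and_comm
    have hout :
        {x | {k ∈ s | x ∈ P k} = F ∧ x ∉ P a} = boolCombination P F (insert a (s \ F)) := by
      ext x
      rw [boolCombination_insert_right, Set.mem_inter_iff, mem_boolCombination_sdiff_iff P hF]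
      exact and_comm
    have : Infinite {x // {k ∈ s | x ∈ P k} = F ∧ x ∈ P a} :=
      (hin ▸ boolCombination_infinite hindep
        (by simp [ha, haF, Finset.disjoint_sdiff])).to_subtype
    have : Infinite {x // {k ∈ s | x ∈ P k} = F ∧ x ∉ P a} :=
      (hout ▸ boolCombination_infinite hindep (by simp [haF, Finset.disjoint_sdiff])).to_subtype
    rw [mk_eq_aleph0, mk_eq_aleph0]
  · have hempty (p : M → Prop) : #{x // {k ∈ s | x ∈ P k} = F ∧ p x} = 0 :=
      mk_eq_zero_iff.2 ⟨fun x => hF (x.2.1 ▸ Finset.filter_subset _ _)⟩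
    exact (hempty _).trans (hempty _).symm

end

theorem stmt_14_general (M : Type u) [Countable M]
    (P : ℕ → Set M)
    -- (P_k) is an independent family
    (hindep : ∀ K L : Finset ℕ, Disjoint K L →
      ((⋂ k ∈ K, P k) ∩ ⋂ l ∈ L, (P l)ᶜ).Nonempty)
    (n : ℕ) :
    ∃ h : M → M, Function.Bijective h ∧
      (∀ F : Finset ℕ, F ⊆ Finset.range n →
        h '' ((⋂ k ∈ F, P k) ∩ ⋂ l ∈ Finset.range n \ F, (P l)ᶜ) =
          (⋂ k ∈ F, P k) ∩ ⋂ l ∈ Finset.range n \ F, (P l)ᶜ) ∧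
      (∀ x : M, x ∈ P n ↔ h x ∉ P n) := by
  classical
  let f (x : M) : Finset ℕ := {k ∈ Finset.range n | x ∈ P k}
  obtain ⟨h, hh⟩ := Equiv.exists_fiberwise_swap f (P n)
    (mk_trace_inter_eq_mk_trace_diff hindep Finset.notMem_range_self)
  refine ⟨h, h.bijective, fun F hF => ?_, fun x => (hh x).2⟩
  ext y
  change y ∈ h '' boolCombination P F _ ↔ y ∈ boolCombination P F _
  rw [h.image_eq_preimage_symm, Set.mem_preimage, mem_boolCombination_sdiff_iff P hF,
    mem_boolCombination_sdiff_iff P hF]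
  change f (h.symm y) = F ↔ f y = F
  rw [← (hh (h.symm y)).1, h.apply_symm_apply]

theorem stmt_14 (M : Type u) [Countable M] [Infinite M]
    (P : ℕ → Set M)
    -- (P_k) is an independent family
    (hindep : ∀ K L : Finset ℕ, Disjoint K L →
      ((⋂ k ∈ K, P k) ∩ ⋂ l ∈ L, (P l)ᶜ).Nonempty)
    (n : ℕ) :
    ∃ h : M → M, Function.Bijective h ∧
      (∀ F : Finset ℕ, F ⊆ Finset.range n →
        h '' ((⋂ k ∈ F, P k) ∩ ⋂ l ∈ Finset.range n \ F, (P l)ᶜ) =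
          (⋂ k ∈ F, P k) ∩ ⋂ l ∈ Finset.range n \ F, (P l)ᶜ) ∧
      (∀ x : M, x ∈ P n ↔ h x ∉ P n) :=
  stmt_14_general M P hindep n
end
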